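/- Let (M, g, ∇) be a constant curvature statistical manifold and ∇^α = ∇̂ + αK its α-connection for α ∈ ℝ. If the pseudo-Riemannian metric g does not have constant sectional curvature, then the statistical manifold (M, g, ∇^α) does not have constant curvature for any α ≠ ±1. Moreover, the curvature of ∇^α satisfies R^α(X,Y) = R̂(X,Y) + α²[K_X, K_Y] when R = R* holds. -/
import Mathlib


open scoped BigOperators

namespace StatMfd

/-- Vector fields on an "abstract manifold": derivations of the algebra `A`
of smooth functions. -/
abbrev VF (A : Type*) [CommRing A] [Algebra ℝ A] := Derivation ℝ A A

variable {A : Type*} [CommRing A] [Algebra ℝ A]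

/-- An affine connection on vector fields. -/
structure Conn (A : Type*) [CommRing A] [Algebra ℝ A] where
  D : VF A → VF A → VF A
  add_left : ∀ X Y Z, D (X + Y) Z = D X Z + D Y Z
  smul_left : ∀ (f : A) (X Y), D (f • X) Y = f • D X Y
  add_right : ∀ X Y Z, D X (Y + Z) = D X Y + D X Z
  leibniz : ∀ (f : A) (X Y), D X (f • Y) = f • D X Y + (X f) • Y

/-- A pseudo-Riemannian metric: a symmetric nondegenerate `A`-bilinear form. -/
structure Metric (A : Type*) [CommRing A] [Algebra ℝ A] where
  g : VF A → VF A → A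
  add_left : ∀ X Y Z, g (X + Y) Z = g X Z + g Y Z
  smul_left : ∀ (f : A) (X Y), g (f • X) Y = f * g X Y
  symm : ∀ X Y, g X Y = g Y X
  nondeg : ∀ X, (∀ Y, g X Y = 0) → X = 0

/-- The connection `∇` is torsion free. -/
def TorsionFree (C : Conn A) : Prop := ∀ X Y, C.D X Y - C.D Y X = ⁅X, Y⁆

/-- The cubic form `C(X,Y,Z) = (∇_X g)(Y,Z)`. -/
def cubic (gm : Metric A) (C : Conn A) (X Y Z : VF A) : A :=
  X (gm.g Y Z) - gm.g (C.D X Y) Z - gm.g Y (C.D X Z)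

/-- Total symmetry of a `(0,3)`-tensor (valued in `A` or in vector fields). -/
def TotSym3 {B : Type*} (T : VF A → VF A → VF A → B) : Prop :=
  (∀ X Y Z, T X Y Z = T Y X Z) ∧ (∀ X Y Z, T X Y Z = T X Z Y)

/-- Total symmetry of a `(0,4)`-tensor. -/
def TotSym4 (T : VF A → VF A → VF A → VF A → A) : Prop :=
  (∀ X Y Z W, T X Y Z W = T Y X Z W) ∧ (∀ X Y Z W, T X Y Z W = T X Z Y W) ∧
    (∀ X Y Z W, T X Y Z W = T X Y W Z)

/-- `(g, ∇)` is a statistical structure. -/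
def IsStatistical (gm : Metric A) (C : Conn A) : Prop :=
  TorsionFree C ∧ TotSym3 (cubic gm C)

/-- `∇*` is the dual connection of `∇` with respect to `g`. -/
def IsDual (gm : Metric A) (C Cs : Conn A) : Prop :=
  ∀ X Y Z, X (gm.g Y Z) = gm.g (C.D X Y) Z + gm.g Y (Cs.D X Z)

/-- `h` is the Levi-Civita connection of `g`. -/
def IsLeviCivita (gm : Metric A) (h : Conn A) : Prop :=
  TorsionFree h ∧ ∀ X Y Z, X (gm.g Y Z) = gm.g (h.D X Y) Z + gm.g Y (h.D X Z)

/-- The difference tensor `K(X,Y) = ∇_X Y − ∇̂_X Y`. -/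
def Kdiff (C h : Conn A) (X Y : VF A) : VF A := C.D X Y - h.D X Y

/-- The curvature tensor of a connection. -/
def curv (C : Conn A) (X Y Z : VF A) : VF A :=
  C.D X (C.D Y Z) - C.D Y (C.D X Z) - C.D ⁅X, Y⁆ Z

/-- `(∇_X K)(Y,Z)` for a `(1,2)`-tensor `K`. -/
def covK (C : Conn A) (K : VF A → VF A → VF A) (X Y Z : VF A) : VF A :=
  C.D X (K Y Z) - K (C.D X Y) Z - K Y (C.D X Z)

/-- `(∇_X T)(Y,Z,W)` for a `(0,3)`-tensor `T`. -/
def covC (C : Conn A) (T : VF A → VF A → VF A → A) (X Y Z W : VF A) : A :=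
  X (T Y Z W) - T (C.D X Y) Z W - T Y (C.D X Z) W - T Y Z (C.D X W)

/-- `(∇_X T)(Y,Z)` for a `(0,2)`-tensor `T`. -/
def cov2 (C : Conn A) (T : VF A → VF A → A) (X Y Z : VF A) : A :=
  X (T Y Z) - T (C.D X Y) Z - T Y (C.D X Z)

/-- `(∇_X R)(Y,Z)W` for the curvature tensor of a connection. -/
def covR (C : Conn A) (X Y Z W : VF A) : VF A :=
  C.D X (curv C Y Z W) - curv C (C.D X Y) Z W - curv C Y (C.D X Z) W
    - curv C Y Z (C.D X W)

/-- A global frame of vector fields together with its dual coframe. -/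
structure Frame (A : Type*) [CommRing A] [Algebra ℝ A] (n : ℕ) where
  e : Fin n → VF A
  ε : Fin n → VF A → A
  ε_add : ∀ i X Y, ε i (X + Y) = ε i X + ε i Y
  ε_smul : ∀ i (f : A) X, ε i (f • X) = f * ε i X
  expand : ∀ X, X = ∑ i, ε i X • e i

/-- The Ricci curvature `Ric(Y,Z) = tr{X ↦ R(X,Y)Z}` computed in a frame. -/
def ricci {n : ℕ} (F : Frame A n) (C : Conn A) (Y Z : VF A) : A :=
  ∑ i, F.ε i (curv C (F.e i) Y Z)

/-- `τ_g(X) = tr K_X` computed in a frame. -/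
def tau {n : ℕ} (F : Frame A n) (K : VF A → VF A → VF A) (X : VF A) : A :=
  ∑ i, F.ε i (K X (F.e i))

/-- `(div^∇̂ K)(Y,Z)`, the trace of `V ↦ (∇̂_V K)(Y,Z)`, computed in a frame. -/
def divK {n : ℕ} (F : Frame A n) (h : Conn A) (K : VF A → VF A → VF A)
    (Y Z : VF A) : A :=
  ∑ i, F.ε i (covK h K (F.e i) Y Z)

/-- `(M,g,∇)` has constant curvature `k`. -/
def ConstCurv (gm : Metric A) (C : Conn A) (k : ℝ) : Prop :=
  ∀ X Y Z, curv C X Y Z = k • (gm.g Y Z • X - gm.g X Z • Y)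

/-- Projective flatness of a connection, via Eisenhart's characterization:
for `n = 2` total symmetry of `∇ Ric`, for `n ≥ 3` vanishing of the
projective curvature tensor. -/
def ProjFlat {n : ℕ} (F : Frame A n) (C : Conn A) : Prop :=
  (n = 2 ∧ TotSym3 (cov2 C (ricci F C))) ∨
    (3 ≤ n ∧ ∀ X Y Z, curv C X Y Z =
      ((n : ℝ) - 1)⁻¹ • (ricci F C Y Z • X - ricci F C X Z • Y))
section Aux
variable {A : Type*} [CommRing A] [Algebra ℝ A]

lemma g_add_right (gm : Metric A) (X Y Z : VF A) :
    gm.g X (Y + Z) = gm.g X Y + gm.g X Z := by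
  rw [gm.symm, gm.add_left, gm.symm Y, gm.symm Z]

lemma g_smul_right (gm : Metric A) (f : A) (X Y : VF A) :
    gm.g X (f • Y) = f * gm.g X Y := by
  rw [gm.symm, gm.smul_left, gm.symm]

lemma g_sub_left (gm : Metric A) (X Y Z : VF A) :
    gm.g (X - Y) Z = gm.g X Z - gm.g Y Z := by
  have h := gm.add_left (X - Y) Y Z
  rw [sub_add_cancel] at h
  exact eq_sub_of_add_eq h.symm

lemma g_sub_right (gm : Metric A) (X Y Z : VF A) :
    gm.g X (Y - Z) = gm.g X Y - gm.g X Z := by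
  rw [gm.symm, g_sub_left, gm.symm Y, gm.symm Z]

lemma g_rsmul_left (gm : Metric A) (r : ℝ) (X Y : VF A) :
    gm.g (r • X) Y = algebraMap ℝ A r * gm.g X Y := by
  rw [← algebraMap_smul A r X, gm.smul_left]

lemma D_sub_right (C : Conn A) (X Y Z : VF A) :
    C.D X (Y - Z) = C.D X Y - C.D X Z := by
  have h := C.add_right X (Y - Z) Z
  rw [sub_add_cancel] at h
  exact eq_sub_of_add_eq h.symm

lemma D_sub_left (C : Conn A) (X Y Z : VF A) :
    C.D (X - Y) Z = C.D X Z - C.D Y Z := by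
  have h := C.add_left (X - Y) Y Z
  rw [sub_add_cancel] at h
  exact eq_sub_of_add_eq h.symm

lemma D_rsmul_right (C : Conn A) (r : ℝ) (X Y : VF A) :
    C.D X (r • Y) = r • C.D X Y := by
  rw [← algebraMap_smul A r Y, C.leibniz, Derivation.map_algebraMap, zero_smul,
    add_zero, algebraMap_smul]

lemma D_rsmul_left (C : Conn A) (r : ℝ) (X Y : VF A) :
    C.D (r • X) Y = r • C.D X Y := by
  rw [← algebraMap_smul A r X, C.smul_left, algebraMap_smul]

end Aux
section Aux2
variable {A : Type*} [CommRing A] [Algebra ℝ A]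

lemma curv_skew (gm : Metric A) (C1 C2 : Conn A)
    (hd : ∀ X Y Z, X (gm.g Y Z) = gm.g (C1.D X Y) Z + gm.g Y (C2.D X Z))
    (X Y Z W : VF A) :
    gm.g (curv C1 X Y Z) W + gm.g Z (curv C2 X Y W) = 0 := by
  have e1 : X (Y (gm.g Z W)) =
      gm.g (C1.D X (C1.D Y Z)) W + gm.g (C1.D Y Z) (C2.D X W)
      + (gm.g (C1.D X Z) (C2.D Y W) + gm.g Z (C2.D X (C2.D Y W))) := by
    rw [hd Y Z W, map_add, hd X (C1.D Y Z) W, hd X Z (C2.D Y W)]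
  have e2 : Y (X (gm.g Z W)) =
      gm.g (C1.D Y (C1.D X Z)) W + gm.g (C1.D X Z) (C2.D Y W)
      + (gm.g (C1.D Y Z) (C2.D X W) + gm.g Z (C2.D Y (C2.D X W))) := by
    rw [hd X Z W, map_add, hd Y (C1.D X Z) W, hd Y Z (C2.D X W)]
  have e3 : (⁅X, Y⁆ : VF A) (gm.g Z W) =
      gm.g (C1.D ⁅X, Y⁆ Z) W + gm.g Z (C2.D ⁅X, Y⁆ W) := hd _ _ _
  have ec : (⁅X, Y⁆ : VF A) (gm.g Z W)
      = X (Y (gm.g Z W)) - Y (X (gm.g Z W)) := Derivation.commutator_apply _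
  unfold curv
  rw [g_sub_left, g_sub_left, g_sub_right, g_sub_right]
  linear_combination e2 - e1 + e3 - ec

lemma Kdiff_add_right (C h : Conn A) (X Y Z : VF A) :
    Kdiff C h X (Y + Z) = Kdiff C h X Y + Kdiff C h X Z := by
  unfold Kdiff; rw [C.add_right, h.add_right]; abel

lemma Kdiff_sub_left (C h : Conn A) (X Y Z : VF A) :
    Kdiff C h (X - Y) Z = Kdiff C h X Z - Kdiff C h Y Z := by
  unfold Kdiff; rw [D_sub_left, D_sub_left]; abel

lemma Kdiff_rsmul_right (C h : Conn A) (r : ℝ) (X Y : VF A) :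
    Kdiff C h X (r • Y) = r • Kdiff C h X Y := by
  unfold Kdiff; rw [D_rsmul_right, D_rsmul_right, smul_sub]

lemma Kdiff_symm (C h : Conn A) (hC : TorsionFree C) (hh : TorsionFree h)
    (X Y : VF A) : Kdiff C h X Y = Kdiff C h Y X := by
  have : Kdiff C h X Y - Kdiff C h Y X = 0 := by
    unfold Kdiff
    have h1 := hC X Y
    have h2 := hh X Y
    rw [sub_sub_sub_comm, h1, h2, sub_self]
  exact sub_eq_zero.mp this

end Aux2
section Aux3
variable {A : Type*} [CommRing A] [Algebra ℝ A]

lemma cubic_eq (gm : Metric A) (C h : Conn A)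
    (hLC2 : ∀ X Y Z, X (gm.g Y Z) = gm.g (h.D X Y) Z + gm.g Y (h.D X Z))
    (X Y Z : VF A) :
    cubic gm C X Y Z = -(gm.g (Kdiff C h X Y) Z) - gm.g (Kdiff C h X Z) Y := by
  unfold cubic Kdiff
  have a := g_sub_left gm (C.D X Y) (h.D X Y) Z
  have b := g_sub_left gm (C.D X Z) (h.D X Z) Y
  have c := hLC2 X Y Z
  have d := gm.symm Y (C.D X Z)
  have e := gm.symm Y (h.D X Z)
  linear_combination c + a + b - d + e

lemma T13 (gm : Metric A) (C h : Conn A)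
    (hstat : IsStatistical gm C)
    (hLC2 : ∀ X Y Z, X (gm.g Y Z) = gm.g (h.D X Y) Z + gm.g Y (h.D X Z))
    (hh : TorsionFree h) (a b c : VF A) :
    gm.g (Kdiff C h a b) c = gm.g (Kdiff C h c b) a := by
  have hsym := hstat.2.1 a c b
  rw [cubic_eq gm C h hLC2, cubic_eq gm C h hLC2] at hsym
  have hk : Kdiff C h a c = Kdiff C h c a := Kdiff_symm C h hstat.1 hh a c
  rw [hk] at hsym
  linear_combination -hsym

lemma T23 (gm : Metric A) (C h : Conn A)
    (hstat : IsStatistical gm C)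
    (hLC2 : ∀ X Y Z, X (gm.g Y Z) = gm.g (h.D X Y) Z + gm.g Y (h.D X Z))
    (hh : TorsionFree h) (a b c : VF A) :
    gm.g (Kdiff C h a b) c = gm.g (Kdiff C h a c) b := by
  rw [Kdiff_symm C h hstat.1 hh a b, T13 gm C h hstat hLC2 hh b a c,
    Kdiff_symm C h hstat.1 hh c a, T13 gm C h hstat hLC2 hh a c b]

lemma gcovK_symm (gm : Metric A) (C h : Conn A)
    (hstat : IsStatistical gm C)
    (hLC2 : ∀ X Y Z, X (gm.g Y Z) = gm.g (h.D X Y) Z + gm.g Y (h.D X Z))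
    (hh : TorsionFree h) (X Y Z W : VF A) :
    gm.g (covK h (Kdiff C h) X Y Z) W = gm.g (covK h (Kdiff C h) X Y W) Z := by
  have T := T23 gm C h hstat hLC2 hh
  unfold covK
  rw [g_sub_left, g_sub_left, g_sub_left, g_sub_left]
  have e1 : gm.g (h.D X (Kdiff C h Y Z)) W
      = X (gm.g (Kdiff C h Y Z) W) - gm.g (Kdiff C h Y Z) (h.D X W) := by
    linear_combination -hLC2 X (Kdiff C h Y Z) W
  have e2 : gm.g (h.D X (Kdiff C h Y W)) Z
      = X (gm.g (Kdiff C h Y W) Z) - gm.g (Kdiff C h Y W) (h.D X Z) := by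
    linear_combination -hLC2 X (Kdiff C h Y W) Z
  have t1 := T Y Z W
  have ft : X (gm.g (Kdiff C h Y Z) W) = X (gm.g (Kdiff C h Y W) Z) :=
    congrArg X t1
  have t2 := T Y Z (h.D X W)
  have t3 := T (h.D X Y) Z W
  have t4 := T Y (h.D X Z) W
  have s2 := gm.symm (Kdiff C h Y Z) (h.D X W)
  have s2' := gm.symm (Kdiff C h Y W) (h.D X Z)
  have t4' := T Y W (h.D X Z)
  linear_combination e1 - e2 + ft - t2 - t3 + t4'

lemma alpha_curv (C h : Conn A) (hh : TorsionFree h) (α : ℝ) (X Y Z : VF A) :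
    h.D X (h.D Y Z + α • Kdiff C h Y Z) + α • Kdiff C h X (h.D Y Z + α • Kdiff C h Y Z)
      - (h.D Y (h.D X Z + α • Kdiff C h X Z) + α • Kdiff C h Y (h.D X Z + α • Kdiff C h X Z))
      - (h.D ⁅X, Y⁆ Z + α • Kdiff C h ⁅X, Y⁆ Z)
      = curv h X Y Z + α • (covK h (Kdiff C h) X Y Z - covK h (Kdiff C h) Y X Z)
        + α ^ 2 • (Kdiff C h X (Kdiff C h Y Z) - Kdiff C h Y (Kdiff C h X Z)) := by
  have hb : Kdiff C h ⁅X, Y⁆ Z = Kdiff C h (h.D X Y) Z - Kdiff C h (h.D Y X) Z := by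
    rw [← Kdiff_sub_left, hh X Y]
  rw [h.add_right, h.add_right, D_rsmul_right, D_rsmul_right,
    Kdiff_add_right, Kdiff_add_right, Kdiff_rsmul_right, Kdiff_rsmul_right, hb]
  unfold curv covK
  module

end Aux3
section Aux4
variable {A : Type*} [CommRing A] [Algebra ℝ A]

lemma one_curv (C h : Conn A) (hh : TorsionFree h) (X Y Z : VF A) :
    curv C X Y Z = curv h X Y Z
      + (covK h (Kdiff C h) X Y Z - covK h (Kdiff C h) Y X Z)
      + (Kdiff C h X (Kdiff C h Y Z) - Kdiff C h Y (Kdiff C h X Z)) := by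
  have hCD : ∀ U V : VF A, h.D U V + Kdiff C h U V = C.D U V := by
    intro U V; simp [Kdiff]
  have hac := alpha_curv C h hh 1 X Y Z
  simp only [one_smul, one_pow] at hac
  rw [hCD Y Z, hCD X Z] at hac
  rw [hCD X (C.D Y Z), hCD Y (C.D X Z), hCD ⁅X, Y⁆ Z] at hac
  unfold curv
  rw [hac]
  unfold curv
  abel

lemma Sdiff_zero (gm : Metric A) (C h : Conn A)
    (hstat : IsStatistical gm C) (hLC : IsLeviCivita gm h)
    (k : ℝ) (hconst : ConstCurv gm C k) (X Y Z : VF A) :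
    covK h (Kdiff C h) X Y Z - covK h (Kdiff C h) Y X Z = 0 := by
  have T := T23 gm C h hstat hLC.2 hLC.1
  have hval : ∀ (P Q R W : VF A),
      gm.g (covK h (Kdiff C h) P Q R - covK h (Kdiff C h) Q P R) W
        = gm.g (curv C P Q R) W - gm.g (curv h P Q R) W
          - (gm.g (Kdiff C h P (Kdiff C h Q R)) W
            - gm.g (Kdiff C h Q (Kdiff C h P R)) W) := by
    intro P Q R W
    have h1 : covK h (Kdiff C h) P Q R - covK h (Kdiff C h) Q P R
        = curv C P Q R - curv h P Q R
          - (Kdiff C h P (Kdiff C h Q R) - Kdiff C h Q (Kdiff C h P R)) := by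
      rw [one_curv C h hLC.1 P Q R]; abel
    rw [h1, g_sub_left, g_sub_left, g_sub_left]
  apply gm.nondeg
  intro W
  have hsym : gm.g (covK h (Kdiff C h) X Y Z - covK h (Kdiff C h) Y X Z) W
      = gm.g (covK h (Kdiff C h) X Y W - covK h (Kdiff C h) Y X W) Z := by
    rw [g_sub_left, g_sub_left,
      gcovK_symm gm C h hstat hLC.2 hLC.1 X Y Z W,
      gcovK_symm gm C h hstat hLC.2 hLC.1 Y X Z W]
  have hA : gm.g (curv C X Y Z) W + gm.g (curv C X Y W) Z = 0 := by
    rw [hconst X Y Z, hconst X Y W, g_rsmul_left, g_rsmul_left,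
      g_sub_left, g_sub_left, gm.smul_left, gm.smul_left, gm.smul_left,
      gm.smul_left]
    ring
  have hB : gm.g (curv h X Y Z) W + gm.g (curv h X Y W) Z = 0 := by
    have hsk := curv_skew gm h h hLC.2 X Y Z W
    linear_combination hsk - gm.symm Z (curv h X Y W)
  have hC : gm.g (Kdiff C h X (Kdiff C h Y Z)) W
      - gm.g (Kdiff C h Y (Kdiff C h X Z)) W
      + (gm.g (Kdiff C h X (Kdiff C h Y W)) Z
        - gm.g (Kdiff C h Y (Kdiff C h X W)) Z) = 0 := by
    have u1 := T X (Kdiff C h Y Z) W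
    have u2 := T Y (Kdiff C h X Z) W
    have u3 := T X (Kdiff C h Y W) Z
    have u4 := T Y (Kdiff C h X W) Z
    have s1 := gm.symm (Kdiff C h X W) (Kdiff C h Y Z)
    have s2 := gm.symm (Kdiff C h Y W) (Kdiff C h X Z)
    linear_combination u1 - u2 + u3 - u4 + s1 - s2
  have hskew : gm.g (covK h (Kdiff C h) X Y Z - covK h (Kdiff C h) Y X Z) W
      + gm.g (covK h (Kdiff C h) X Y W - covK h (Kdiff C h) Y X W) Z = 0 := by
    rw [hval X Y Z W, hval X Y W Z]
    linear_combination hA - hB - hC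
  have hdouble : gm.g (covK h (Kdiff C h) X Y Z - covK h (Kdiff C h) Y X Z) W
      + gm.g (covK h (Kdiff C h) X Y Z - covK h (Kdiff C h) Y X Z) W = 0 := by
    nth_rewrite 2 [hsym]
    exact hskew
  have hhalf : gm.g (covK h (Kdiff C h) X Y Z - covK h (Kdiff C h) Y X Z) W
      = (1/2 : ℝ) • (gm.g (covK h (Kdiff C h) X Y Z - covK h (Kdiff C h) Y X Z) W
        + gm.g (covK h (Kdiff C h) X Y Z - covK h (Kdiff C h) Y X Z) W) := by
    module
  rw [hhalf, hdouble, smul_zero]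

end Aux4


/-- for a constant curvature statistical manifold whose metric
is not of constant sectional curvature, the `α`-connection `∇̂ + αK` does not
have constant curvature for `α ≠ ±1`; moreover
`R^α = R̂ + α²[K_X, K_Y]`. -/
theorem stmt19 (gm : Metric A) (C h : Conn A)
    (hstat : IsStatistical gm C) (hLC : IsLeviCivita gm h)
    (k : ℝ) (hconst : ConstCurv gm C k)
    (hg : ¬ ∃ c : ℝ, ∀ X Y Z, curv h X Y Z =
      c • (gm.g Y Z • X - gm.g X Z • Y))
    (α : ℝ) (hα : α ≠ 1 ∧ α ≠ -1) :
    let Dα : VF A → VF A → VF A := fun X Y => h.D X Y + α • Kdiff C h X Y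
    let Rα : VF A → VF A → VF A → VF A := fun X Y Z =>
      Dα X (Dα Y Z) - Dα Y (Dα X Z) - Dα ⁅X, Y⁆ Z
    (¬ ∃ c : ℝ, ∀ X Y Z, Rα X Y Z = c • (gm.g Y Z • X - gm.g X Z • Y)) ∧
      (∀ X Y Z, Rα X Y Z = curv h X Y Z +
        (α ^ 2) • (Kdiff C h X (Kdiff C h Y Z)
          - Kdiff C h Y (Kdiff C h X Z))) := by
  intro Dα Rα
  have hS := Sdiff_zero gm C h hstat hLC k hconst
  have hRα : ∀ X Y Z, Rα X Y Z = curv h X Y Z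
      + (α ^ 2) • (Kdiff C h X (Kdiff C h Y Z) - Kdiff C h Y (Kdiff C h X Z)) := by
    intro X Y Z
    have hac := alpha_curv C h hLC.1 α X Y Z
    rw [hS X Y Z, smul_zero, add_zero] at hac
    exact hac
  refine ⟨?_, hRα⟩
  rintro ⟨c, hc⟩
  apply hg
  have hα2 : (1 : ℝ) - α ^ 2 ≠ 0 := by
    intro hcontra
    rcases mul_eq_zero.mp (show (1 - α) * (1 + α) = 0 by linear_combination hcontra)
      with h1 | h2
    · exact hα.1 (by linarith)
    · exact hα.2 (by linarith)
  refine ⟨(1 - α ^ 2)⁻¹ * (c - α ^ 2 * k), fun X Y Z => ?_⟩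
  have hKK : Kdiff C h X (Kdiff C h Y Z) - Kdiff C h Y (Kdiff C h X Z)
      = curv C X Y Z - curv h X Y Z := by
    rw [one_curv C h hLC.1 X Y Z, hS X Y Z]; abel
  have hmain := hc X Y Z
  rw [hRα X Y Z, hKK, hconst X Y Z] at hmain
  have expand : curv h X Y Z + (α ^ 2) •
        (k • (gm.g Y Z • X - gm.g X Z • Y) - curv h X Y Z)
      = (1 - α ^ 2) • curv h X Y Z
        + (α ^ 2 * k) • (gm.g Y Z • X - gm.g X Z • Y) := by
    module
  rw [expand] at hmain
  have key : (1 - α ^ 2) • curv h X Y Z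
      = (c - α ^ 2 * k) • (gm.g Y Z • X - gm.g X Z • Y) := by
    rw [sub_smul c]
    exact eq_sub_of_add_eq hmain
  calc curv h X Y Z = (1 - α ^ 2)⁻¹ • ((1 - α ^ 2) • curv h X Y Z) := by
        rw [smul_smul, inv_mul_cancel₀ hα2, one_smul]
    _ = _ := by rw [key, smul_smul]

end StatMfd
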